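/- Let f : (0, ∞) → ℝ be given by f(s) = √(s/(1+s)). Then for every s > 0, f is twice differentiable at s with f'(s) = ½·s^{−1/2}·(1+s)^{−3/2}, and the two principal-curvature expressions satisfy −f''(s)/(1 + f'(s)²)^{3/2} = 2·(1 + 4s(1+s)³)^{−3/2}·(1+s)²·(1+4s) and 1/(f(s)·√(1 + f'(s)²)) = 2·(1 + 4s(1+s)³)^{−1/2}·(1+s)²; moreover 0 < 2·(1 + 4s(1+s)³)^{−3/2}·(1+s)²·(1+4s) < 2·(1 + 4s(1+s)³)^{−1/2}·(1+s)². -/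

import Mathlib

/-!
Write `a = √s`, `b = √(1+s)` and `c = √(1 + 4s(1+s)³)`. Differentiating the rpow form of `f'`
and clearing the half-integer powers gives `f = a/b`, `f' = 1/(2ab³)`,
`f'' = −(1+4s)/(4a³b⁵)` and `√(1 + f'²) = c/(2ab³)`, so `λ₁ = 2b⁴(1+4s)/c³` and `λ₂ = 2b⁴/c`.
Thus `λ₁ < λ₂` amounts to `1 + 4s < c² = 1 + 4s(1+s)³`, i.e. to `(1+s)³ > 1`.
-/

open Real Set

noncomputable section

/-- The profile function `f(s) = √(s/(1+s))` of the model surface of revolution. -/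
def profileF (s : ℝ) : ℝ := Real.sqrt (s / (1 + s))

open Filter Topology

lemma rpow_neg_div_two_eq_inv_sqrt_rpow {x : ℝ} (hx : 0 ≤ x) (r : ℝ) :
    x ^ (-r / 2) = (√x ^ r)⁻¹ := by
  rw [neg_div, rpow_neg hx, rpow_div_two_eq_sqrt _ hx]

lemma hasDerivAt_rpow_mul_one_add_rpow {s : ℝ} (hs : 0 < s) (p q : ℝ) :
    HasDerivAt (fun t => t ^ p * (1 + t) ^ q)
      (p * s ^ (p - 1) * (1 + s) ^ q + s ^ p * (q * (1 + s) ^ (q - 1))) s := by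
  have hp := hasDerivAt_rpow_const (p := p) (Or.inl hs.ne')
  have hq := ((hasDerivAt_id' s).const_add 1).rpow_const (p := q) (Or.inl (by positivity))
  exact (hp.fun_mul hq).congr_deriv (by ring)

lemma hasDerivAt_profileF {s : ℝ} (hs : 0 < s) :
    HasDerivAt profileF ((1 / 2) * (s ^ (-(1 : ℝ) / 2) * (1 + s) ^ (-(3 : ℝ) / 2))) s := by
  have hquot : HasDerivAt (fun t => t / (1 + t)) (1 / (1 + s) ^ 2) s :=
    ((hasDerivAt_id' s).fun_div ((hasDerivAt_id' s).const_add 1) (by positivity)).congr_deriv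
      (by ring)
  refine (hquot.sqrt (by positivity)).congr_deriv ?_
  rw [rpow_neg_div_two_eq_inv_sqrt_rpow hs.le, rpow_neg_div_two_eq_inv_sqrt_rpow (by positivity),
    rpow_one, rpow_ofNat, sqrt_div hs.le]
  have hb := sq_sqrt (by positivity : (0 : ℝ) ≤ 1 + s)
  field_simp
  rw [show √(1 + s) ^ 4 = (√(1 + s) ^ 2) ^ 2 by ring, hb]

lemma hasDerivAt_deriv_profileF {s : ℝ} (hs : 0 < s) :
    HasDerivAt (deriv profileF)
      ((1 / 2) * ((-(1 : ℝ) / 2) * s ^ (-(3 : ℝ) / 2) * (1 + s) ^ (-(3 : ℝ) / 2)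
        + s ^ (-(1 : ℝ) / 2) * ((-(3 : ℝ) / 2) * (1 + s) ^ (-(5 : ℝ) / 2)))) s := by
  have hderiv : deriv profileF =ᶠ[𝓝 s]
      fun t => (1 / 2) * (t ^ (-(1 : ℝ) / 2) * (1 + t) ^ (-(3 : ℝ) / 2)) :=
    eventually_of_mem (Ioi_mem_nhds hs) fun t ht => (hasDerivAt_profileF ht).deriv
  refine (((hasDerivAt_rpow_mul_one_add_rpow hs _ _).const_mul (1 / 2)).congr_of_eventuallyEq
    hderiv).congr_deriv ?_
  norm_num

lemma deriv_profileF_eq {s : ℝ} (hs : 0 < s) :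
    deriv profileF s = (2 * √s * √(1 + s) ^ 3)⁻¹ := by
  rw [(hasDerivAt_profileF hs).deriv, rpow_neg_div_two_eq_inv_sqrt_rpow hs.le,
    rpow_neg_div_two_eq_inv_sqrt_rpow (by positivity), rpow_one, rpow_ofNat]
  field_simp

lemma deriv_deriv_profileF_eq {s : ℝ} (hs : 0 < s) :
    deriv (deriv profileF) s = -(1 + 4 * s) / (4 * √s ^ 3 * √(1 + s) ^ 5) := by
  have ha := sq_sqrt hs.le
  have hb := sq_sqrt (by positivity : (0 : ℝ) ≤ 1 + s)
  rw [(hasDerivAt_deriv_profileF hs).deriv]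
  simp only [rpow_neg_div_two_eq_inv_sqrt_rpow hs.le,
    rpow_neg_div_two_eq_inv_sqrt_rpow (by positivity : (0 : ℝ) ≤ 1 + s), rpow_one, rpow_ofNat]
  field_simp
  rw [ha, hb]
  ring

lemma one_add_deriv_profileF_sq {s : ℝ} (hs : 0 < s) :
    1 + deriv profileF s ^ 2 = (√(1 + 4 * s * (1 + s) ^ 3) / (2 * √s * √(1 + s) ^ 3)) ^ 2 := by
  have ha := sq_sqrt hs.le
  have hb := sq_sqrt (by positivity : (0 : ℝ) ≤ 1 + s)
  rw [deriv_profileF_eq hs, div_pow, sq_sqrt (by positivity)]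
  field_simp
  rw [show √(1 + s) ^ 6 = (√(1 + s) ^ 2) ^ 3 by ring, hb, ha]
  ring

lemma meridian_curvature_profileF {s : ℝ} (hs : 0 < s) :
    -deriv (deriv profileF) s / (1 + deriv profileF s ^ 2) ^ ((3 : ℝ) / 2)
      = 2 * (1 + 4 * s * (1 + s) ^ 3) ^ (-(3 : ℝ) / 2) * (1 + s) ^ 2 * (1 + 4 * s) := by
  have hb := sq_sqrt (by positivity : (0 : ℝ) ≤ 1 + s)
  rw [deriv_deriv_profileF_eq hs, one_add_deriv_profileF_sq hs,
    rpow_div_two_eq_sqrt _ (sq_nonneg _), sqrt_sq (by positivity), rpow_ofNat,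
    rpow_neg_div_two_eq_inv_sqrt_rpow (by positivity), rpow_ofNat]
  field_simp
  rw [show √(1 + s) ^ 4 = (√(1 + s) ^ 2) ^ 2 by ring, hb]
  ring

lemma circumferential_curvature_profileF {s : ℝ} (hs : 0 < s) :
    1 / (profileF s * √(1 + deriv profileF s ^ 2))
      = 2 * (1 + 4 * s * (1 + s) ^ 3) ^ (-(1 : ℝ) / 2) * (1 + s) ^ 2 := by
  have hb := sq_sqrt (by positivity : (0 : ℝ) ≤ 1 + s)
  rw [one_add_deriv_profileF_sq hs, sqrt_sq (by positivity), profileF, sqrt_div hs.le,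
    rpow_neg_div_two_eq_inv_sqrt_rpow (by positivity), rpow_one]
  field_simp
  rw [show √(1 + s) ^ 4 = (√(1 + s) ^ 2) ^ 2 by ring, hb]

lemma rpow_neg_three_halves_mul_lt_rpow_neg_half {x y : ℝ} (hx : 0 < x) (hy : y < x) :
    x ^ (-(3 : ℝ) / 2) * y < x ^ (-(1 : ℝ) / 2) := by
  rw [show -(1 : ℝ) / 2 = -3 / 2 + 1 by norm_num, rpow_add_one hx.ne']
  exact mul_lt_mul_of_pos_left hy (rpow_pos_of_pos hx _)

theorem stmt7 :
    ∀ s > (0 : ℝ),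
      DifferentiableAt ℝ profileF s ∧
      DifferentiableAt ℝ (deriv profileF) s ∧
      deriv profileF s = (1 / 2) * s ^ (-(1 : ℝ) / 2) * (1 + s) ^ (-(3 : ℝ) / 2) ∧
      -(deriv (deriv profileF) s) / (1 + (deriv profileF s) ^ 2) ^ ((3 : ℝ) / 2)
        = 2 * (1 + 4 * s * (1 + s) ^ 3) ^ (-(3 : ℝ) / 2) * (1 + s) ^ 2 * (1 + 4 * s) ∧
      1 / (profileF s * Real.sqrt (1 + (deriv profileF s) ^ 2))
        = 2 * (1 + 4 * s * (1 + s) ^ 3) ^ (-(1 : ℝ) / 2) * (1 + s) ^ 2 ∧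
      0 < 2 * (1 + 4 * s * (1 + s) ^ 3) ^ (-(3 : ℝ) / 2) * (1 + s) ^ 2 * (1 + 4 * s) ∧
      2 * (1 + 4 * s * (1 + s) ^ 3) ^ (-(3 : ℝ) / 2) * (1 + s) ^ 2 * (1 + 4 * s)
        < 2 * (1 + 4 * s * (1 + s) ^ 3) ^ (-(1 : ℝ) / 2) * (1 + s) ^ 2 := by
  intro s hs
  have hX : 0 < 1 + 4 * s * (1 + s) ^ 3 := by positivity
  have hlt : 1 + 4 * s < 1 + 4 * s * (1 + s) ^ 3 := by
    nlinarith [one_lt_pow₀ (by linarith : 1 < 1 + s) (by norm_num : 3 ≠ 0)]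
  refine ⟨(hasDerivAt_profileF hs).differentiableAt,
    (hasDerivAt_deriv_profileF hs).differentiableAt,
    by rw [(hasDerivAt_profileF hs).deriv, mul_assoc],
    meridian_curvature_profileF hs, circumferential_curvature_profileF hs, by positivity, ?_⟩
  have h := mul_lt_mul_of_pos_left (rpow_neg_three_halves_mul_lt_rpow_neg_half hX hlt)
    (by positivity : 0 < 2 * (1 + s) ^ 2)
  linarith

end
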